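/- arXiv:1704.06106 — 2 statements merged into one kernel-verified Lean document; each statement's English description precedes it below -/
import Mathlib

section
/- Let P be the Riesz projection on the circle ((Pf)^(n) = f̂(n) for n ≥ 0, 0 otherwise), let β ∈ H¹(𝕊), and let s ∈ {-1/2, 0}. Then the commutator [β, P] (multiplication by β composed with P minus P composed with multiplication by β) is bounded from H^s(𝕊) to H^{s+1/2}(𝕊), with ‖[β, P]f‖_{H^{s+1/2}} ≤ ‖β‖_{H¹} ‖f‖_{H^s}. -/
open Real
open scoped ENNReal

namespace CommAux


lemma rpow_sq {x : ℝ} (hx : 0 ≤ x) (a : ℝ) : (x ^ a) ^ 2 = x ^ (2 * a) := by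
  rw [← Real.rpow_natCast (x ^ a) 2, ← Real.rpow_mul hx]
  norm_num [mul_comm]

lemma tsum_mul_le_sqrt {x y : ℕ → ℝ} (hx0 : ∀ i, 0 ≤ x i) (hy0 : ∀ i, 0 ≤ y i)
    (hx : Summable fun i => x i ^ 2) (hy : Summable fun i => y i ^ 2) :
    ∑' i, x i * y i ≤ Real.sqrt (∑' i, x i ^ 2) * Real.sqrt (∑' i, y i ^ 2) := by
  have hX : 0 ≤ ∑' i, x i ^ 2 := tsum_nonneg fun i => sq_nonneg _
  have hY : 0 ≤ ∑' i, y i ^ 2 := tsum_nonneg fun i => sq_nonneg _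
  have hsum : Summable fun i => x i * y i :=
    Summable.of_nonneg_of_le (fun i => mul_nonneg (hx0 i) (hy0 i))
      (fun i => by nlinarith [sq_nonneg (x i - y i)]) (hx.add hy)
  refine Summable.tsum_le_of_sum_le hsum fun s => ?_
  have h1 : (∑ i ∈ s, x i * y i) ^ 2 ≤ (∑ i ∈ s, x i ^ 2) * ∑ i ∈ s, y i ^ 2 :=
    Finset.sum_mul_sq_le_sq_mul_sq s x y
  have h2 : (∑ i ∈ s, x i ^ 2) * ∑ i ∈ s, y i ^ 2 ≤ (∑' i, x i ^ 2) * ∑' i, y i ^ 2 := by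
    have hsx := Summable.sum_le_tsum s (fun i _ => sq_nonneg (x i)) hx
    have hsy := Summable.sum_le_tsum s (fun i _ => sq_nonneg (y i)) hy
    have : 0 ≤ ∑ i ∈ s, x i ^ 2 := Finset.sum_nonneg fun i _ => sq_nonneg _
    have : 0 ≤ ∑ i ∈ s, y i ^ 2 := Finset.sum_nonneg fun i _ => sq_nonneg _
    nlinarith
  rw [← Real.sqrt_mul hX]
  exact (Real.le_sqrt (Finset.sum_nonneg fun i _ => mul_nonneg (hx0 i) (hy0 i))
    (mul_nonneg hX hY)).2 (h1.trans h2)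

lemma weight_sq_le {s : ℝ} (hs : s = -(1 / 2) ∨ s = 0) {u v d : ℝ}
    (hu : 1 ≤ u) (hv : 1 ≤ v) (hud : u ≤ d) (hvd : v ≤ d) :
    (u ^ (s + 1 / 2) * v ^ (-s)) ^ 2 ≤ d := by
  have hu0 : (0 : ℝ) < u := lt_of_lt_of_le one_pos hu
  have hv0 : (0 : ℝ) < v := lt_of_lt_of_le one_pos hv
  rcases hs with rfl | rfl
  · rw [show (-(1 / 2 : ℝ) + 1 / 2) = 0 by norm_num, Real.rpow_zero, one_mul,
      show (-(-(1 / 2 : ℝ))) = 1 / 2 by norm_num, rpow_sq hv0.le,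
      show (2 : ℝ) * (1 / 2) = 1 by norm_num, Real.rpow_one]
    exact hvd
  · rw [neg_zero, Real.rpow_zero, mul_one, zero_add, rpow_sq hu0.le,
      show (2 : ℝ) * (1 / 2) = 1 by norm_num, Real.rpow_one]
    exact hud

lemma x_sq_le {s : ℝ} (hs : s = -(1 / 2) ∨ s = 0) {u v d B : ℝ}
    (hu : 1 ≤ u) (hv : 1 ≤ v) (hud : u ≤ d) (hvd : v ≤ d) (hB : 0 ≤ B) :
    (B * (u ^ (s + 1 / 2) * v ^ (-s) / d)) ^ 2 ≤ B ^ 2 * d⁻¹ := by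
  have hd0 : (0 : ℝ) < d := lt_of_lt_of_le one_pos (hu.trans hud)
  have ht := weight_sq_le hs hu hv hud hvd
  have h1 : (B * (u ^ (s + 1 / 2) * v ^ (-s) / d)) ^ 2
      = B ^ 2 * ((u ^ (s + 1 / 2) * v ^ (-s)) ^ 2 / d ^ 2) := by ring
  rw [h1]
  have h2 : (u ^ (s + 1 / 2) * v ^ (-s)) ^ 2 / d ^ 2 ≤ d⁻¹ := by
    rw [div_le_iff₀ (by positivity)]
    have : d⁻¹ * d ^ 2 = d := by field_simp
    rw [this]; exact ht
  exact mul_le_mul_of_nonneg_left h2 (sq_nonneg B)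

def fiberEquiv (m : ℕ) : Fin (m + 1) ≃ {p : ℕ × ℕ // p.1 + p.2 = m} where
  toFun i := ⟨(i.1, m - i.1), by omega⟩
  invFun q := ⟨q.1.1, by omega⟩
  left_inv i := by ext; simp
  right_inv q := by
    ext
    · simp
    · simp; omega

/-- Core double-sum bound: summing the per-row Cauchy–Schwarz weights over all rows,
grouped along antidiagonals, is controlled by `∑ β m ^ 2`. -/
lemma double_sum_le (β : ℕ → ℝ) (hβ : Summable fun m => β m ^ 2)
    (x : ℕ → ℕ → ℝ)
    (hx : ∀ N j, x N j ^ 2 ≤ β (N + j) ^ 2 * ((N : ℝ) + (j : ℝ) + 2)⁻¹) :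
    ∑' N : ℕ, ∑' j : ℕ, ENNReal.ofReal (x N j ^ 2) ≤ ENNReal.ofReal (∑' m, β m ^ 2) := by
  have e1 : ∑' N : ℕ, ∑' j : ℕ, ENNReal.ofReal (x N j ^ 2)
      = ∑' p : ℕ × ℕ, ENNReal.ofReal (x p.1 p.2 ^ 2) :=
    (ENNReal.tsum_prod (f := fun N j => ENNReal.ofReal (x N j ^ 2))).symm
  rw [e1]
  set φ : ℕ × ℕ → ℝ≥0∞ := fun p => ENNReal.ofReal (x p.1 p.2 ^ 2) with hφ
  have e2 : ∑' p : ℕ × ℕ, φ p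
      = ∑' m : ℕ, ∑' q : {p : ℕ × ℕ // p.1 + p.2 = m}, φ q.1 := by
    rw [← (Equiv.sigmaFiberEquiv (fun p : ℕ × ℕ => p.1 + p.2)).tsum_eq φ,
      ENNReal.tsum_sigma']
    rfl
  rw [e2]
  have key : ∀ m : ℕ, ∑' q : {p : ℕ × ℕ // p.1 + p.2 = m}, φ q.1
      ≤ ENNReal.ofReal (β m ^ 2) := by
    intro m
    rw [← (fiberEquiv m).tsum_eq (fun q => φ q.1), tsum_fintype]
    have hterm : ∀ i : Fin (m + 1),
        φ ((fiberEquiv m i) : {p : ℕ × ℕ // p.1 + p.2 = m}).1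
          ≤ ENNReal.ofReal (β m ^ 2 * ((m : ℝ) + 2)⁻¹) := by
      intro i
      apply ENNReal.ofReal_le_ofReal
      have h := hx i.1 (m - i.1)
      have hi : i.1 + (m - i.1) = m := by omega
      have hc : ((i.1 : ℝ) + ((m - i.1 : ℕ) : ℝ) + 2) = (m : ℝ) + 2 := by
        have : ((m - i.1 : ℕ) : ℝ) = (m : ℝ) - (i.1 : ℝ) := by
          have : (i.1 : ℕ) ≤ m := by omega
          push_cast [this]; ring
        rw [this]; ring
      rw [hi, hc] at h
      simp only [fiberEquiv, Equiv.coe_fn_mk]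
      exact h
    calc ∑ i : Fin (m + 1), φ ((fiberEquiv m i) : {p : ℕ × ℕ // p.1 + p.2 = m}).1
        ≤ ∑ _i : Fin (m + 1), ENNReal.ofReal (β m ^ 2 * ((m : ℝ) + 2)⁻¹) :=
          Finset.sum_le_sum fun i _ => hterm i
      _ = (m + 1) * ENNReal.ofReal (β m ^ 2 * ((m : ℝ) + 2)⁻¹) := by
          rw [Finset.sum_const, Finset.card_univ, Fintype.card_fin, nsmul_eq_mul]
          norm_num
      _ = ENNReal.ofReal (((m : ℝ) + 1) * (β m ^ 2 * ((m : ℝ) + 2)⁻¹)) := by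
          rw [ENNReal.ofReal_mul (p := ((m : ℝ) + 1)) (by positivity)]
          congr 1
          rw [ENNReal.ofReal_add (by positivity) (by norm_num), ENNReal.ofReal_natCast,
            ENNReal.ofReal_one]
      _ ≤ ENNReal.ofReal (β m ^ 2) := by
          apply ENNReal.ofReal_le_ofReal
          have h2 : ((m : ℝ) + 1) * ((m : ℝ) + 2)⁻¹ ≤ 1 := by
            rw [← div_eq_mul_inv, div_le_one (by positivity)]
            linarith
          calc ((m : ℝ) + 1) * (β m ^ 2 * ((m : ℝ) + 2)⁻¹)
              = β m ^ 2 * (((m : ℝ) + 1) * ((m : ℝ) + 2)⁻¹) := by ring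
            _ ≤ β m ^ 2 * 1 := mul_le_mul_of_nonneg_left h2 (sq_nonneg _)
            _ = β m ^ 2 := mul_one _
  calc ∑' m : ℕ, ∑' q : {p : ℕ × ℕ // p.1 + p.2 = m}, φ q.1
      ≤ ∑' m : ℕ, ENNReal.ofReal (β m ^ 2) := ENNReal.tsum_le_tsum key
    _ = ENNReal.ofReal (∑' m, β m ^ 2) :=
        (ENNReal.ofReal_tsum_of_nonneg (fun m => sq_nonneg _) hβ).symm

lemma weight_sq_le' {s : ℝ} (hs : s = -(1 / 2) ∨ s = 0) {u v d : ℝ}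
    (hu : 1 ≤ u) (hv : 1 ≤ v) (hud : u ≤ d) (hvd : v ≤ d) :
    (u ^ (s + 1 / 2) * v ^ (-s)) ^ 2 ≤ d := by
  have hu0 : (0 : ℝ) < u := lt_of_lt_of_le one_pos hu
  have hv0 : (0 : ℝ) < v := lt_of_lt_of_le one_pos hv
  rcases hs with rfl | rfl
  · rw [show (-(1 / 2 : ℝ) + 1 / 2) = 0 by norm_num, Real.rpow_zero, one_mul,
      show (-(-(1 / 2 : ℝ))) = 1 / 2 by norm_num, rpow_sq hv0.le,
      show (2 : ℝ) * (1 / 2) = 1 by norm_num, Real.rpow_one]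
    exact hvd
  · rw [neg_zero, Real.rpow_zero, mul_one, zero_add, rpow_sq hu0.le,
      show (2 : ℝ) * (1 / 2) = 1 by norm_num, Real.rpow_one]
    exact hud

lemma x_sq_le' {s : ℝ} (hs : s = -(1 / 2) ∨ s = 0) {u v d B : ℝ}
    (hu : 1 ≤ u) (hv : 1 ≤ v) (hud : u ≤ d) (hvd : v ≤ d) :
    (B * (u ^ (s + 1 / 2) * v ^ (-s) / d)) ^ 2 ≤ B ^ 2 * d⁻¹ := by
  have hd0 : (0 : ℝ) < d := lt_of_lt_of_le one_pos (hu.trans hud)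
  have ht := weight_sq_le' hs hu hv hud hvd
  have h1 : (B * (u ^ (s + 1 / 2) * v ^ (-s) / d)) ^ 2
      = B ^ 2 * ((u ^ (s + 1 / 2) * v ^ (-s)) ^ 2 / d ^ 2) := by ring
  rw [h1]
  have h2 : (u ^ (s + 1 / 2) * v ^ (-s)) ^ 2 / d ^ 2 ≤ d⁻¹ := by
    rw [div_le_iff₀ (by positivity)]
    have h3 : d⁻¹ * d ^ 2 = d := by field_simp
    rw [h3]; exact ht
  exact mul_le_mul_of_nonneg_left h2 (sq_nonneg B)

lemma row_bound {s : ℝ} (hs : s = -(1 / 2) ∨ s = 0)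
    {u : ℝ} {v d B F : ℕ → ℝ} (hu : 1 ≤ u) (hv : ∀ j, 1 ≤ v j)
    (hud : ∀ j, u ≤ d j) (hvd : ∀ j, v j ≤ d j)
    (hB0 : ∀ j, 0 ≤ B j) (hF0 : ∀ j, 0 ≤ F j)
    (hB : Summable fun j => B j ^ 2) (hF : Summable fun j => v j ^ (2 * s) * F j ^ 2)
    {z : ℕ → ℂ} (hz : ∀ j, d j * ‖z j‖ = B j * F j) :
    (Summable fun j => (B j * (u ^ (s + 1 / 2) * v j ^ (-s) / d j)) ^ 2) ∧
      u ^ (2 * s + 1) * ‖∑' j, z j‖ ^ 2 ≤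
        (∑' j, (B j * (u ^ (s + 1 / 2) * v j ^ (-s) / d j)) ^ 2) *
          ∑' j, v j ^ (2 * s) * F j ^ 2 := by
  have hu0 : (0 : ℝ) < u := lt_of_lt_of_le one_pos hu
  have hv0 : ∀ j, (0 : ℝ) < v j := fun j => lt_of_lt_of_le one_pos (hv j)
  have hd0 : ∀ j, (0 : ℝ) < d j := fun j => lt_of_lt_of_le one_pos (hu.trans (hud j))
  set x : ℕ → ℝ := fun j => B j * (u ^ (s + 1 / 2) * v j ^ (-s) / d j) with hxdef
  set y : ℕ → ℝ := fun j => v j ^ s * F j with hydef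
  have hx0 : ∀ j, 0 ≤ x j := fun j =>
    mul_nonneg (hB0 j) (div_nonneg (mul_nonneg (Real.rpow_nonneg hu0.le _)
      (Real.rpow_nonneg (hv0 j).le _)) (hd0 j).le)
  have hy0 : ∀ j, 0 ≤ y j := fun j => mul_nonneg (Real.rpow_nonneg (hv0 j).le s) (hF0 j)
  have hxsq : Summable fun j => x j ^ 2 := by
    refine Summable.of_nonneg_of_le (fun j => sq_nonneg _) (fun j => ?_) hB
    calc x j ^ 2 ≤ B j ^ 2 * (d j)⁻¹ := x_sq_le' hs hu (hv j) (hud j) (hvd j)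
      _ ≤ B j ^ 2 * 1 := mul_le_mul_of_nonneg_left
          (inv_le_one_of_one_le₀ (hu.trans (hud j))) (sq_nonneg _)
      _ = B j ^ 2 := mul_one _
  have hysq : Summable fun j => y j ^ 2 := by
    refine hF.congr fun j => ?_
    simp only [hydef]
    rw [mul_pow, rpow_sq (hv0 j).le]
  have hxy : ∀ j, x j * y j = u ^ (s + 1 / 2) * ‖z j‖ := by
    intro j
    have h1 : v j ^ (-s) * v j ^ s = 1 := by
      rw [← Real.rpow_add (hv0 j)]; norm_num
    have h2 := hz j
    have hdne : d j ≠ 0 := (hd0 j).ne'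
    have h3 : x j * y j = (B j * F j) * (v j ^ (-s) * v j ^ s) * u ^ (s + 1 / 2) / d j := by
      simp only [hxdef, hydef]; ring
    rw [h3, h1, ← h2, mul_one]
    field_simp
  have hxysum : Summable fun j => x j * y j :=
    Summable.of_nonneg_of_le (fun j => mul_nonneg (hx0 j) (hy0 j))
      (fun j => by nlinarith [sq_nonneg (x j - y j)]) (hxsq.add hysq)
  have hupos : (0 : ℝ) < u ^ (s + 1 / 2) := Real.rpow_pos_of_pos hu0 _
  have hznorm : Summable fun j => ‖z j‖ := by
    refine (hxysum.div_const (u ^ (s + 1 / 2))).congr fun j => ?_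
    rw [hxy j]
    field_simp
  have hnorm : ‖∑' j, z j‖ ≤ ∑' j, ‖z j‖ := norm_tsum_le_tsum_norm hznorm
  have hCS : ∑' j, x j * y j ≤ Real.sqrt (∑' j, x j ^ 2) * Real.sqrt (∑' j, y j ^ 2) :=
    tsum_mul_le_sqrt hx0 hy0 hxsq hysq
  have hstep : u ^ (s + 1 / 2) * ‖∑' j, z j‖
      ≤ Real.sqrt (∑' j, x j ^ 2) * Real.sqrt (∑' j, y j ^ 2) := by
    calc u ^ (s + 1 / 2) * ‖∑' j, z j‖ ≤ u ^ (s + 1 / 2) * ∑' j, ‖z j‖ :=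
          mul_le_mul_of_nonneg_left hnorm hupos.le
      _ = ∑' j, u ^ (s + 1 / 2) * ‖z j‖ := tsum_mul_left.symm
      _ = ∑' j, x j * y j := tsum_congr fun j => (hxy j).symm
      _ ≤ _ := hCS
  refine ⟨hxsq, ?_⟩
  have hXnn : 0 ≤ ∑' j, x j ^ 2 := tsum_nonneg fun j => sq_nonneg _
  have hYnn : 0 ≤ ∑' j, y j ^ 2 := tsum_nonneg fun j => sq_nonneg _
  have hsq := pow_le_pow_left₀ (mul_nonneg hupos.le (norm_nonneg _)) hstep 2
  have hexp : (2 : ℝ) * (s + 1 / 2) = 2 * s + 1 := by ring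
  calc u ^ (2 * s + 1) * ‖∑' j, z j‖ ^ 2
      = (u ^ (s + 1 / 2) * ‖∑' j, z j‖) ^ 2 := by
        rw [mul_pow, rpow_sq hu0.le, hexp]
    _ ≤ (Real.sqrt (∑' j, x j ^ 2) * Real.sqrt (∑' j, y j ^ 2)) ^ 2 := hsq
    _ = (∑' j, x j ^ 2) * ∑' j, y j ^ 2 := by
        rw [mul_pow, Real.sq_sqrt hXnn, Real.sq_sqrt hYnn]
    _ = (∑' j, x j ^ 2) * ∑' j, v j ^ (2 * s) * F j ^ 2 := by
        congr 1
        exact tsum_congr fun j => by simp only [hydef]; rw [mul_pow, rpow_sq (hv0 j).le]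

def negE : ℕ ≃ {k : ℤ // k < 0} where
  toFun j := ⟨-((j : ℤ) + 1), by omega⟩
  invFun k := (-(k.1) - 1).toNat
  left_inv j := by simp
  right_inv k := Subtype.ext (by have := k.2; simp; omega)

def posE : ℕ ≃ {k : ℤ // 0 ≤ k} where
  toFun j := ⟨(j : ℤ), by omega⟩
  invFun k := k.1.toNat
  left_inv j := by simp
  right_inv k := Subtype.ext (by have := k.2; simp; omega)

/-- Region 1 row estimate: row `n = N ≥ 0`, columns `k = -(j+1) < 0`. -/
lemma region1 (b f : ℤ → ℂ) {s : ℝ} (hs : s = -(1 / 2) ∨ s = 0)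
    (hβ : Summable fun m : ℕ => (((m : ℝ) + 2) * ‖b ((m : ℤ) + 1)‖) ^ 2)
    (hf : Summable fun n : ℤ => ((|n| : ℝ) + 1) ^ (2 * s) * ‖f n‖ ^ 2) (N : ℕ) :
    (Summable fun j : ℕ => ((((N + j : ℕ) : ℝ) + 2) * ‖b (((N + j : ℕ) : ℤ) + 1)‖ *
        (((N : ℝ) + 1) ^ (s + 1 / 2) * ((j : ℝ) + 2) ^ (-s) / ((N : ℝ) + (j : ℝ) + 2))) ^ 2) ∧
      ((N : ℝ) + 1) ^ (2 * s + 1) * ‖∑' k : {k : ℤ // k < 0}, b ((N : ℤ) - k) * f k‖ ^ 2 ≤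
        (∑' j : ℕ, ((((N + j : ℕ) : ℝ) + 2) * ‖b (((N + j : ℕ) : ℤ) + 1)‖ *
          (((N : ℝ) + 1) ^ (s + 1 / 2) * ((j : ℝ) + 2) ^ (-s) / ((N : ℝ) + (j : ℝ) + 2))) ^ 2) *
          ∑' n : ℤ, ((|n| : ℝ) + 1) ^ (2 * s) * ‖f n‖ ^ 2 := by
  have hB : Summable fun j : ℕ =>
      ((((N + j : ℕ) : ℝ) + 2) * ‖b (((N + j : ℕ) : ℤ) + 1)‖) ^ 2 :=
    hβ.comp_injective (add_right_injective N)
  have hinjf : Function.Injective (fun j : ℕ => -((j : ℤ) + 1)) := fun a c h => by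
    simpa using h
  have hterm : ∀ j : ℕ, (|((-((j : ℤ) + 1) : ℤ) : ℝ)| + 1) ^ (2 * s) * ‖f (-((j : ℤ) + 1))‖ ^ 2
      = ((j : ℝ) + 2) ^ (2 * s) * ‖f (-((j : ℤ) + 1))‖ ^ 2 := by
    intro j
    have h1 : |((-((j : ℤ) + 1) : ℤ) : ℝ)| + 1 = (j : ℝ) + 2 := by
      push_cast
      rw [abs_neg, abs_of_nonneg (by positivity : (0 : ℝ) ≤ (j : ℝ) + 1)]
      ring
    rw [h1]
  have hFv : Summable fun j : ℕ => ((j : ℝ) + 2) ^ (2 * s) * ‖f (-((j : ℤ) + 1))‖ ^ 2 :=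
    (hf.comp_injective hinjf).congr fun j => hterm j
  have hN0 : (0 : ℝ) ≤ (N : ℝ) := Nat.cast_nonneg N
  have hu' : (1 : ℝ) ≤ (N : ℝ) + 1 := by linarith
  have hv' : ∀ j : ℕ, (1 : ℝ) ≤ (j : ℝ) + 2 := fun j => by
    have : (0 : ℝ) ≤ (j : ℝ) := Nat.cast_nonneg j; linarith
  have hud' : ∀ j : ℕ, (N : ℝ) + 1 ≤ (N : ℝ) + (j : ℝ) + 2 := fun j => by
    have : (0 : ℝ) ≤ (j : ℝ) := Nat.cast_nonneg j; linarith
  have hvd' : ∀ j : ℕ, (j : ℝ) + 2 ≤ (N : ℝ) + (j : ℝ) + 2 := fun j => by linarith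
  have hz' : ∀ j : ℕ, ((N : ℝ) + (j : ℝ) + 2) * ‖b ((N : ℤ) + ((j : ℤ) + 1)) * f (-((j : ℤ) + 1))‖
      = (((N + j : ℕ) : ℝ) + 2) * ‖b (((N + j : ℕ) : ℤ) + 1)‖ * ‖f (-((j : ℤ) + 1))‖ := by
    intro j
    rw [norm_mul, show (((N + j : ℕ) : ℤ) + 1) = (N : ℤ) + ((j : ℤ) + 1) by push_cast; ring,
      show (((N + j : ℕ) : ℝ) + 2) = (N : ℝ) + (j : ℝ) + 2 by push_cast; ring]
    ring
  have hrow := row_bound (u := (N : ℝ) + 1) (v := fun j => (j : ℝ) + 2)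
    (d := fun j => (N : ℝ) + (j : ℝ) + 2)
    (B := fun j => (((N + j : ℕ) : ℝ) + 2) * ‖b (((N + j : ℕ) : ℤ) + 1)‖)
    (F := fun j => ‖f (-((j : ℤ) + 1))‖)
    (z := fun j => b ((N : ℤ) + ((j : ℤ) + 1)) * f (-((j : ℤ) + 1)))
    hs hu' hv' hud' hvd'
    (fun j => mul_nonneg (by positivity) (norm_nonneg _))
    (fun j => norm_nonneg _) hB hFv hz'
  refine ⟨hrow.1, ?_⟩
  have htseq : (∑' k : {k : ℤ // k < 0}, b ((N : ℤ) - k) * f k)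
      = ∑' j : ℕ, b ((N : ℤ) + ((j : ℤ) + 1)) * f (-((j : ℤ) + 1)) := by
    rw [← negE.tsum_eq (fun k : {k : ℤ // k < 0} => b ((N : ℤ) - (k : ℤ)) * f (k : ℤ))]
    refine tsum_congr fun j => ?_
    have h1 : ((negE j : {k : ℤ // k < 0}) : ℤ) = -((j : ℤ) + 1) := rfl
    rw [h1, show (N : ℤ) - -((j : ℤ) + 1) = (N : ℤ) + ((j : ℤ) + 1) by ring]
  rw [htseq]
  refine hrow.2.trans (mul_le_mul_of_nonneg_left ?_ (tsum_nonneg fun j => sq_nonneg _))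
  exact Summable.tsum_le_tsum_of_inj (fun j : ℕ => -((j : ℤ) + 1)) hinjf
    (fun n _ => mul_nonneg (Real.rpow_nonneg (by positivity) _) (sq_nonneg _))
    (fun j => le_of_eq (hterm j).symm) hFv hf

/-- Region 2 row estimate: row `n = -(N+1) < 0`, columns `k = j ≥ 0`. -/
lemma region2 (b f : ℤ → ℂ) {s : ℝ} (hs : s = -(1 / 2) ∨ s = 0)
    (hβ : Summable fun m : ℕ => (((m : ℝ) + 2) * ‖b (-((m : ℤ) + 1))‖) ^ 2)
    (hf : Summable fun n : ℤ => ((|n| : ℝ) + 1) ^ (2 * s) * ‖f n‖ ^ 2) (N : ℕ) :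
    (Summable fun j : ℕ => ((((N + j : ℕ) : ℝ) + 2) * ‖b (-(((N + j : ℕ) : ℤ) + 1))‖ *
        (((N : ℝ) + 2) ^ (s + 1 / 2) * ((j : ℝ) + 1) ^ (-s) / ((N : ℝ) + (j : ℝ) + 2))) ^ 2) ∧
      ((N : ℝ) + 2) ^ (2 * s + 1) *
        ‖∑' k : {k : ℤ // 0 ≤ k}, b (-((N : ℤ) + 1) - k) * f k‖ ^ 2 ≤
        (∑' j : ℕ, ((((N + j : ℕ) : ℝ) + 2) * ‖b (-(((N + j : ℕ) : ℤ) + 1))‖ *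
          (((N : ℝ) + 2) ^ (s + 1 / 2) * ((j : ℝ) + 1) ^ (-s) / ((N : ℝ) + (j : ℝ) + 2))) ^ 2) *
          ∑' n : ℤ, ((|n| : ℝ) + 1) ^ (2 * s) * ‖f n‖ ^ 2 := by
  have hB : Summable fun j : ℕ =>
      ((((N + j : ℕ) : ℝ) + 2) * ‖b (-(((N + j : ℕ) : ℤ) + 1))‖) ^ 2 :=
    hβ.comp_injective (add_right_injective N)
  have hinjf : Function.Injective (fun j : ℕ => (j : ℤ)) := fun a c h => by simpa using h
  have hterm : ∀ j : ℕ, (|(((j : ℕ) : ℤ) : ℝ)| + 1) ^ (2 * s) * ‖f ((j : ℤ))‖ ^ 2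
      = ((j : ℝ) + 1) ^ (2 * s) * ‖f ((j : ℤ))‖ ^ 2 := by
    intro j
    have h1 : |(((j : ℕ) : ℤ) : ℝ)| + 1 = (j : ℝ) + 1 := by
      push_cast
      rw [abs_of_nonneg (Nat.cast_nonneg j)]
    rw [h1]
  have hFv : Summable fun j : ℕ => ((j : ℝ) + 1) ^ (2 * s) * ‖f ((j : ℤ))‖ ^ 2 :=
    (hf.comp_injective hinjf).congr fun j => hterm j
  have hN0 : (0 : ℝ) ≤ (N : ℝ) := Nat.cast_nonneg N
  have hu' : (1 : ℝ) ≤ (N : ℝ) + 2 := by linarith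
  have hv' : ∀ j : ℕ, (1 : ℝ) ≤ (j : ℝ) + 1 := fun j => by
    have : (0 : ℝ) ≤ (j : ℝ) := Nat.cast_nonneg j; linarith
  have hud' : ∀ j : ℕ, (N : ℝ) + 2 ≤ (N : ℝ) + (j : ℝ) + 2 := fun j => by
    have : (0 : ℝ) ≤ (j : ℝ) := Nat.cast_nonneg j; linarith
  have hvd' : ∀ j : ℕ, (j : ℝ) + 1 ≤ (N : ℝ) + (j : ℝ) + 2 := fun j => by linarith
  have hz' : ∀ j : ℕ, ((N : ℝ) + (j : ℝ) + 2) * ‖b (-((N : ℤ) + 1) - (j : ℤ)) * f ((j : ℤ))‖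
      = (((N + j : ℕ) : ℝ) + 2) * ‖b (-(((N + j : ℕ) : ℤ) + 1))‖ * ‖f ((j : ℤ))‖ := by
    intro j
    rw [norm_mul, show (-(((N + j : ℕ) : ℤ) + 1)) = -((N : ℤ) + 1) - (j : ℤ) by push_cast; ring,
      show (((N + j : ℕ) : ℝ) + 2) = (N : ℝ) + (j : ℝ) + 2 by push_cast; ring]
    ring
  have hrow := row_bound (u := (N : ℝ) + 2) (v := fun j => (j : ℝ) + 1)
    (d := fun j => (N : ℝ) + (j : ℝ) + 2)
    (B := fun j => (((N + j : ℕ) : ℝ) + 2) * ‖b (-(((N + j : ℕ) : ℤ) + 1))‖)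
    (F := fun j => ‖f ((j : ℤ))‖)
    (z := fun j => b (-((N : ℤ) + 1) - (j : ℤ)) * f ((j : ℤ)))
    hs hu' hv' hud' hvd'
    (fun j => mul_nonneg (by positivity) (norm_nonneg _))
    (fun j => norm_nonneg _) hB hFv hz'
  refine ⟨hrow.1, ?_⟩
  have htseq : (∑' k : {k : ℤ // 0 ≤ k}, b (-((N : ℤ) + 1) - k) * f k)
      = ∑' j : ℕ, b (-((N : ℤ) + 1) - (j : ℤ)) * f ((j : ℤ)) := by
    rw [← posE.tsum_eq (fun k : {k : ℤ // 0 ≤ k} => b (-((N : ℤ) + 1) - (k : ℤ)) * f (k : ℤ))]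
    exact tsum_congr fun j => rfl
  rw [htseq]
  refine hrow.2.trans (mul_le_mul_of_nonneg_left ?_ (tsum_nonneg fun j => sq_nonneg _))
  exact Summable.tsum_le_tsum_of_inj (fun j : ℕ => (j : ℤ)) hinjf
    (fun n _ => mul_nonneg (Real.rpow_nonneg (by positivity) _) (sq_nonneg _))
    (fun j => le_of_eq (hterm j).symm) hFv hf


end CommAux

open CommAux

/-- Commutator of multiplication by `β` with the Riesz projection `P`, on the Fourier
side: for `β ∈ H¹(𝕊)`, `f ∈ H^s(𝕊)` with `s ∈ {-1/2, 0}`, the Fourier coefficients of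
`[β,P]f` are `c(n) = -(2π)^{-1/2} Σ_{k<0} β̂(n-k) f̂(k)` for `n ≥ 0` and
`c(n) = (2π)^{-1/2} Σ_{k≥0} β̂(n-k) f̂(k)` for `n < 0`, and
`‖[β,P]f‖²_{H^{s+1/2}} ≤ ‖β‖²_{H¹} ‖f‖²_{H^s}`. -/


theorem commutator_riesz_gains_half_derivative (b f : ℤ → ℂ) (s : ℝ)
    (hs : s = -(1 / 2) ∨ s = 0)
    (hb : Summable fun n : ℤ => ((|n| : ℝ) + 1) ^ (2 : ℝ) * ‖b n‖ ^ 2)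
    (hf : Summable fun n : ℤ => ((|n| : ℝ) + 1) ^ (2 * s) * ‖f n‖ ^ 2)
    (c : ℤ → ℂ)
    (hc : ∀ n : ℤ, c n =
      if 0 ≤ n then
        -((Real.sqrt (2 * π) : ℂ))⁻¹ * ∑' k : {k : ℤ // k < 0}, b (n - k) * f k
      else ((Real.sqrt (2 * π) : ℂ))⁻¹ * ∑' k : {k : ℤ // 0 ≤ k}, b (n - k) * f k) :
    (∑' n : ℤ, ((|n| : ℝ) + 1) ^ (2 * s + 1) * ‖c n‖ ^ 2) ≤
      (∑' n : ℤ, ((|n| : ℝ) + 1) ^ (2 : ℝ) * ‖b n‖ ^ 2) *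
        ∑' n : ℤ, ((|n| : ℝ) + 1) ^ (2 * s) * ‖f n‖ ^ 2 := by
  have hπ : (0 : ℝ) < π := Real.pi_pos
  set A := ∑' n : ℤ, ((|n| : ℝ) + 1) ^ (2 : ℝ) * ‖b n‖ ^ 2 with hA
  set Fs := ∑' n : ℤ, ((|n| : ℝ) + 1) ^ (2 * s) * ‖f n‖ ^ 2 with hFs
  have hA0 : 0 ≤ A := by
    rw [hA]
    exact tsum_nonneg fun n => mul_nonneg (Real.rpow_nonneg (by positivity) _) (sq_nonneg _)
  have hF0 : 0 ≤ Fs := by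
    rw [hFs]
    exact tsum_nonneg fun n => mul_nonneg (Real.rpow_nonneg (by positivity) _) (sq_nonneg _)
  have hpow2 : ∀ n : ℤ, ((|n| : ℝ) + 1) ^ (2 : ℝ) * ‖b n‖ ^ 2 = ((|n| : ℝ) + 1) ^ 2 * ‖b n‖ ^ 2 := by
    intro n
    congr 1
    rw [← Real.rpow_natCast ((|(n : ℝ)|) + 1) 2]
    norm_num
  have hpow2' : ∀ n : ℤ, ((|n| : ℝ) + 1) ^ (2 : ℝ) * ‖b n‖ ^ 2 = (((|n| : ℝ) + 1) * ‖b n‖) ^ 2 := by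
    intro n
    rw [hpow2 n, mul_pow]
  have hb' : Summable fun n : ℤ => ((|(n : ℝ)| + 1) * ‖b n‖) ^ 2 := hb.congr hpow2'
  have hinj1 : Function.Injective (fun m : ℕ => (m : ℤ) + 1) := fun a c h => by simpa using h
  have hinj2 : Function.Injective (fun m : ℕ => -((m : ℤ) + 1)) := fun a c h => by simpa using h
  have habs1 : ∀ m : ℕ, |(((m : ℤ) + 1 : ℤ) : ℝ)| + 1 = (m : ℝ) + 2 := by
    intro m
    push_cast
    rw [abs_of_nonneg (by positivity : (0 : ℝ) ≤ (m : ℝ) + 1)]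
    ring
  have habs2 : ∀ m : ℕ, |((-((m : ℤ) + 1) : ℤ) : ℝ)| + 1 = (m : ℝ) + 2 := by
    intro m
    push_cast
    rw [abs_neg, abs_of_nonneg (by positivity : (0 : ℝ) ≤ (m : ℝ) + 1)]
    ring
  have hβ1 : Summable fun m : ℕ => (((m : ℝ) + 2) * ‖b ((m : ℤ) + 1)‖) ^ 2 :=
    (hb'.comp_injective hinj1).congr fun m =>
      show ((|(((m : ℤ) + 1 : ℤ) : ℝ)| + 1) * ‖b ((m : ℤ) + 1)‖) ^ 2
          = (((m : ℝ) + 2) * ‖b ((m : ℤ) + 1)‖) ^ 2 by rw [habs1 m]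
  have hβ2 : Summable fun m : ℕ => (((m : ℝ) + 2) * ‖b (-((m : ℤ) + 1))‖) ^ 2 :=
    (hb'.comp_injective hinj2).congr fun m =>
      show ((|((-((m : ℤ) + 1) : ℤ) : ℝ)| + 1) * ‖b (-((m : ℤ) + 1))‖) ^ 2
          = (((m : ℝ) + 2) * ‖b (-((m : ℤ) + 1))‖) ^ 2 by rw [habs2 m]
  have hβ1A : (∑' m : ℕ, (((m : ℝ) + 2) * ‖b ((m : ℤ) + 1)‖) ^ 2) ≤ A := by
    rw [hA]
    exact Summable.tsum_le_tsum_of_inj (fun m : ℕ => (m : ℤ) + 1) hinj1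
      (fun n _ => mul_nonneg (Real.rpow_nonneg (by positivity) _) (sq_nonneg _))
      (fun m => le_of_eq (by rw [hpow2' ((m : ℤ) + 1), habs1 m])) hβ1 hb
  have hβ2A : (∑' m : ℕ, (((m : ℝ) + 2) * ‖b (-((m : ℤ) + 1))‖) ^ 2) ≤ A := by
    rw [hA]
    exact Summable.tsum_le_tsum_of_inj (fun m : ℕ => -((m : ℤ) + 1)) hinj2
      (fun n _ => mul_nonneg (Real.rpow_nonneg (by positivity) _) (sq_nonneg _))
      (fun m => le_of_eq (by rw [hpow2' (-((m : ℤ) + 1)), habs2 m])) hβ2 hb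
  have h2π : (0 : ℝ) < 2 * π := by linarith
  have hinv2 : ((Real.sqrt (2 * π))⁻¹) ^ 2 = (2 * π)⁻¹ := by
    rw [inv_pow, Real.sq_sqrt h2π.le]
  -- per-row bounds
  have key1 : ∀ N : ℕ, (|(((N : ℕ) : ℤ) : ℝ)| + 1) ^ (2 * s + 1) * ‖c ((N : ℕ) : ℤ)‖ ^ 2
      ≤ (2 * π)⁻¹ * ((∑' j : ℕ, ((((N + j : ℕ) : ℝ) + 2) * ‖b (((N + j : ℕ) : ℤ) + 1)‖ *
          (((N : ℝ) + 1) ^ (s + 1 / 2) * ((j : ℝ) + 2) ^ (-s) / ((N : ℝ) + (j : ℝ) + 2))) ^ 2) * Fs) := by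
    intro N
    have hreg := (region1 b f hs hβ1 hf N).2
    have habsN : |(((N : ℕ) : ℤ) : ℝ)| + 1 = (N : ℝ) + 1 := by
      push_cast
      rw [abs_of_nonneg (Nat.cast_nonneg N)]
    have hcN : c ((N : ℕ) : ℤ) = -((Real.sqrt (2 * π) : ℂ))⁻¹ *
        ∑' k : {k : ℤ // k < 0}, b (((N : ℕ) : ℤ) - k) * f k := by
      rw [hc (((N : ℕ) : ℤ)), if_pos (by positivity : (0 : ℤ) ≤ ((N : ℕ) : ℤ))]
    have hnormc : ‖c ((N : ℕ) : ℤ)‖ = (Real.sqrt (2 * π))⁻¹ *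
        ‖∑' k : {k : ℤ // k < 0}, b (((N : ℕ) : ℤ) - k) * f k‖ := by
      rw [hcN, norm_mul, norm_neg, norm_inv, Complex.norm_real, Real.norm_eq_abs,
        abs_of_nonneg (Real.sqrt_nonneg _)]
    rw [habsN, hnormc, mul_pow, hinv2, mul_left_comm]
    exact mul_le_mul_of_nonneg_left hreg (by positivity)
  have key2 : ∀ N : ℕ, (|((-((N : ℤ) + 1) : ℤ) : ℝ)| + 1) ^ (2 * s + 1) * ‖c (-((N : ℤ) + 1))‖ ^ 2
      ≤ (2 * π)⁻¹ * ((∑' j : ℕ, ((((N + j : ℕ) : ℝ) + 2) * ‖b (-(((N + j : ℕ) : ℤ) + 1))‖ *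
          (((N : ℝ) + 2) ^ (s + 1 / 2) * ((j : ℝ) + 1) ^ (-s) / ((N : ℝ) + (j : ℝ) + 2))) ^ 2) * Fs) := by
    intro N
    have hreg := (region2 b f hs hβ2 hf N).2
    have hcN : c (-((N : ℤ) + 1)) = ((Real.sqrt (2 * π) : ℂ))⁻¹ *
        ∑' k : {k : ℤ // 0 ≤ k}, b (-((N : ℤ) + 1) - k) * f k := by
      rw [hc (-((N : ℤ) + 1)), if_neg (by omega : ¬ (0 : ℤ) ≤ -((N : ℤ) + 1))]
    have hnormc : ‖c (-((N : ℤ) + 1))‖ = (Real.sqrt (2 * π))⁻¹ *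
        ‖∑' k : {k : ℤ // 0 ≤ k}, b (-((N : ℤ) + 1) - k) * f k‖ := by
      rw [hcN, norm_mul, norm_inv, Complex.norm_real, Real.norm_eq_abs,
        abs_of_nonneg (Real.sqrt_nonneg _)]
    rw [habs2 N, hnormc, mul_pow, hinv2, mul_left_comm]
    exact mul_le_mul_of_nonneg_left hreg (by positivity)
  -- pass to ℝ≥0∞
  have hg0 : ∀ n : ℤ, 0 ≤ (|(n : ℝ)| + 1) ^ (2 * s + 1) * ‖c n‖ ^ 2 := fun n =>
    mul_nonneg (Real.rpow_nonneg (by positivity) _) (sq_nonneg _)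
  have hsplit : (∑' n : ℤ, ENNReal.ofReal ((|(n : ℝ)| + 1) ^ (2 * s + 1) * ‖c n‖ ^ 2))
      = (∑' N : ℕ, ENNReal.ofReal ((|(((N : ℕ) : ℤ) : ℝ)| + 1) ^ (2 * s + 1) * ‖c ((N : ℕ) : ℤ)‖ ^ 2))
        + ∑' N : ℕ, ENNReal.ofReal ((|((-((N : ℤ) + 1) : ℤ) : ℝ)| + 1) ^ (2 * s + 1) * ‖c (-((N : ℤ) + 1))‖ ^ 2) :=
    tsum_of_nat_of_neg_add_one ENNReal.summable ENNReal.summable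
  have hC : (0 : ℝ) ≤ (2 * π)⁻¹ * Fs := mul_nonneg (by positivity) hF0
  have hO1 : (∑' N : ℕ, ENNReal.ofReal ((|(((N : ℕ) : ℤ) : ℝ)| + 1) ^ (2 * s + 1) * ‖c ((N : ℕ) : ℤ)‖ ^ 2))
      ≤ ENNReal.ofReal ((2 * π)⁻¹ * Fs) * ENNReal.ofReal A := by
    have hmono : ∀ N : ℕ, ENNReal.ofReal ((|(((N : ℕ) : ℤ) : ℝ)| + 1) ^ (2 * s + 1) * ‖c ((N : ℕ) : ℤ)‖ ^ 2)
        ≤ ENNReal.ofReal ((2 * π)⁻¹ * Fs) *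
          ENNReal.ofReal (∑' j : ℕ, ((((N + j : ℕ) : ℝ) + 2) * ‖b (((N + j : ℕ) : ℤ) + 1)‖ *
            (((N : ℝ) + 1) ^ (s + 1 / 2) * ((j : ℝ) + 2) ^ (-s) / ((N : ℝ) + (j : ℝ) + 2))) ^ 2) := by
      intro N
      refine le_trans (ENNReal.ofReal_le_ofReal (key1 N)) ?_
      rw [← ENNReal.ofReal_mul hC]
      exact ENNReal.ofReal_le_ofReal (le_of_eq (by ring))
    refine le_trans (ENNReal.tsum_le_tsum hmono) ?_
    rw [ENNReal.tsum_mul_left]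
    refine mul_le_mul_right ?_ _
    have e1 : (∑' N : ℕ, ENNReal.ofReal (∑' j : ℕ, ((((N + j : ℕ) : ℝ) + 2) * ‖b (((N + j : ℕ) : ℤ) + 1)‖ *
        (((N : ℝ) + 1) ^ (s + 1 / 2) * ((j : ℝ) + 2) ^ (-s) / ((N : ℝ) + (j : ℝ) + 2))) ^ 2))
        = ∑' N : ℕ, ∑' j : ℕ, ENNReal.ofReal (((((N + j : ℕ) : ℝ) + 2) * ‖b (((N + j : ℕ) : ℤ) + 1)‖ *
            (((N : ℝ) + 1) ^ (s + 1 / 2) * ((j : ℝ) + 2) ^ (-s) / ((N : ℝ) + (j : ℝ) + 2))) ^ 2) :=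
      tsum_congr fun N => ENNReal.ofReal_tsum_of_nonneg (fun j => sq_nonneg _)
        (region1 b f hs hβ1 hf N).1
    rw [e1]
    refine le_trans (double_sum_le (fun m : ℕ => ((m : ℝ) + 2) * ‖b ((m : ℤ) + 1)‖) hβ1 _ ?_) ?_
    · intro N j
      have hN0 : (0 : ℝ) ≤ (N : ℝ) := Nat.cast_nonneg N
      have hj0 : (0 : ℝ) ≤ (j : ℝ) := Nat.cast_nonneg j
      have h := x_sq_le' hs (u := (N : ℝ) + 1) (v := (j : ℝ) + 2) (d := (N : ℝ) + (j : ℝ) + 2)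
        (B := (((N + j : ℕ) : ℝ) + 2) * ‖b (((N + j : ℕ) : ℤ) + 1)‖)
        (by linarith) (by linarith) (by linarith) (by linarith)
      exact h
    · exact ENNReal.ofReal_le_ofReal hβ1A
  have hO2 : (∑' N : ℕ, ENNReal.ofReal ((|((-((N : ℤ) + 1) : ℤ) : ℝ)| + 1) ^ (2 * s + 1) * ‖c (-((N : ℤ) + 1))‖ ^ 2))
      ≤ ENNReal.ofReal ((2 * π)⁻¹ * Fs) * ENNReal.ofReal A := by
    have hmono : ∀ N : ℕ, ENNReal.ofReal ((|((-((N : ℤ) + 1) : ℤ) : ℝ)| + 1) ^ (2 * s + 1) * ‖c (-((N : ℤ) + 1))‖ ^ 2)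
        ≤ ENNReal.ofReal ((2 * π)⁻¹ * Fs) *
          ENNReal.ofReal (∑' j : ℕ, ((((N + j : ℕ) : ℝ) + 2) * ‖b (-(((N + j : ℕ) : ℤ) + 1))‖ *
            (((N : ℝ) + 2) ^ (s + 1 / 2) * ((j : ℝ) + 1) ^ (-s) / ((N : ℝ) + (j : ℝ) + 2))) ^ 2) := by
      intro N
      refine le_trans (ENNReal.ofReal_le_ofReal (key2 N)) ?_
      rw [← ENNReal.ofReal_mul hC]
      exact ENNReal.ofReal_le_ofReal (le_of_eq (by ring))
    refine le_trans (ENNReal.tsum_le_tsum hmono) ?_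
    rw [ENNReal.tsum_mul_left]
    refine mul_le_mul_right ?_ _
    have e1 : (∑' N : ℕ, ENNReal.ofReal (∑' j : ℕ, ((((N + j : ℕ) : ℝ) + 2) * ‖b (-(((N + j : ℕ) : ℤ) + 1))‖ *
        (((N : ℝ) + 2) ^ (s + 1 / 2) * ((j : ℝ) + 1) ^ (-s) / ((N : ℝ) + (j : ℝ) + 2))) ^ 2))
        = ∑' N : ℕ, ∑' j : ℕ, ENNReal.ofReal (((((N + j : ℕ) : ℝ) + 2) * ‖b (-(((N + j : ℕ) : ℤ) + 1))‖ *
            (((N : ℝ) + 2) ^ (s + 1 / 2) * ((j : ℝ) + 1) ^ (-s) / ((N : ℝ) + (j : ℝ) + 2))) ^ 2) :=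
      tsum_congr fun N => ENNReal.ofReal_tsum_of_nonneg (fun j => sq_nonneg _)
        (region2 b f hs hβ2 hf N).1
    rw [e1]
    refine le_trans (double_sum_le (fun m : ℕ => ((m : ℝ) + 2) * ‖b (-((m : ℤ) + 1))‖) hβ2 _ ?_) ?_
    · intro N j
      have hN0 : (0 : ℝ) ≤ (N : ℝ) := Nat.cast_nonneg N
      have hj0 : (0 : ℝ) ≤ (j : ℝ) := Nat.cast_nonneg j
      exact x_sq_le' hs (u := (N : ℝ) + 2) (v := (j : ℝ) + 1) (d := (N : ℝ) + (j : ℝ) + 2)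
        (B := (((N + j : ℕ) : ℝ) + 2) * ‖b (-(((N + j : ℕ) : ℤ) + 1))‖)
        (by linarith) (by linarith) (by linarith) (by linarith)
    · exact ENNReal.ofReal_le_ofReal hβ2A
  have htotal : (∑' n : ℤ, ENNReal.ofReal ((|(n : ℝ)| + 1) ^ (2 * s + 1) * ‖c n‖ ^ 2))
      ≤ ENNReal.ofReal (A * Fs) := by
    rw [hsplit]
    refine le_trans (add_le_add hO1 hO2) ?_
    rw [← ENNReal.ofReal_mul hC, ← ENNReal.ofReal_add (by positivity) (mul_nonneg (mul_nonneg (by positivity) hF0) hA0)]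
    · apply ENNReal.ofReal_le_ofReal
      have hle : (2 * π)⁻¹ ≤ (2 : ℝ)⁻¹ := by
        apply inv_anti₀
        · norm_num
        · nlinarith [Real.pi_gt_three]
      have h' : (2 * π)⁻¹ * (Fs * A) ≤ 2⁻¹ * (Fs * A) :=
        mul_le_mul_of_nonneg_right hle (mul_nonneg hF0 hA0)
      nlinarith [h']
  have hfin : (∑' n : ℤ, ENNReal.ofReal ((|(n : ℝ)| + 1) ^ (2 * s + 1) * ‖c n‖ ^ 2)) ≠ ⊤ :=
    (lt_of_le_of_lt htotal ENNReal.ofReal_lt_top).ne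
  have heq : (∑' n : ℤ, ((|n| : ℝ) + 1) ^ (2 * s + 1) * ‖c n‖ ^ 2)
      = (∑' n : ℤ, ENNReal.ofReal ((|(n : ℝ)| + 1) ^ (2 * s + 1) * ‖c n‖ ^ 2)).toReal := by
    rw [ENNReal.tsum_toReal_eq (fun n => ENNReal.ofReal_ne_top)]
    exact tsum_congr fun n => (ENNReal.toReal_ofReal (hg0 n)).symm
  rw [heq]
  calc (∑' n : ℤ, ENNReal.ofReal ((|(n : ℝ)| + 1) ^ (2 * s + 1) * ‖c n‖ ^ 2)).toReal
      ≤ (ENNReal.ofReal (A * Fs)).toReal := ENNReal.toReal_mono ENNReal.ofReal_ne_top htotal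
    _ = A * Fs := ENNReal.toReal_ofReal (mul_nonneg hA0 hF0)
end

section
/- Let F : Ω → 𝔻 be a bijective holomorphic map between bounded planar domains with C¹-extensions of F and its inverse G to the closures, with bounded derivatives. Then the composition map U : v ↦ v ∘ G is a bounded bijection from H¹(Ω) to H¹(𝔻) with bounded inverse, and for v = (v₁, v₂) with ∂_{z̄}v₁, ∂_z v₂ ∈ L²(Ω), the pushforward u = Uv satisfies ∂_z u₂ = (G')·(∂_z v₂)∘G ∈ L²(𝔻) and ∂_{z̄} u₁ = (G')*·(∂_{z̄} v₁)∘G ∈ L²(𝔻). -/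
/-!
Because `G` is holomorphic, its real derivative is multiplication by `G'`. Every real-linear map
`L : ℂ → ℂ` splits as `L c = c · ∂_z + c̄ · ∂_{z̄}`, so precomposing with multiplication by `G'`
multiplies the `∂_z` part by `G'` and the `∂_{z̄}` part by `(G')*`: this is the Wirtinger chain rule.

For the `H¹` bound, substitute `y = F x`. The Jacobian of the holomorphic map `F` is `|F'|² ≤ M²`,
and `‖D(v ∘ G)(F x)‖ ≤ M ‖Dv x‖`, so with `M ≥ 1` the energy grows by at most `M⁴`; the same
argument with `F` and `G` swapped bounds the inverse. Finally `|∂_z f|, |∂_{z̄} f| ≤ ‖Df‖`, and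
`D(v ∘ G)` is bounded on the disc because `Dv` is bounded on the compact `closure Ω`.
-/

open Complex MeasureTheory Metric

noncomputable section

/-- The Wirtinger derivative `∂_z = (∂₁ - i∂₂)/2` of a function `ℂ → ℂ`. -/
def wz (f : ℂ → ℂ) (z : ℂ) : ℂ := (fderiv ℝ f z 1 - I * fderiv ℝ f z I) / 2

/-- The conjugate Wirtinger derivative `∂_{z̄} = (∂₁ + i∂₂)/2` of a function `ℂ → ℂ`. -/
def wzb (f : ℂ → ℂ) (z : ℂ) : ℂ := (fderiv ℝ f z 1 + I * fderiv ℝ f z I) / 2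

open ComplexConjugate

theorem norm_fderiv_comp_le {𝕜 E F H : Type*} [NontriviallyNormedField 𝕜]
    [NormedAddCommGroup E] [NormedSpace 𝕜 E] [NormedAddCommGroup F] [NormedSpace 𝕜 F]
    [NormedAddCommGroup H] [NormedSpace 𝕜 H] {g : F → H} {f : E → F} {x : E}
    (hg : DifferentiableAt 𝕜 g (f x)) (hf : DifferentiableAt 𝕜 f x) :
    ‖fderiv 𝕜 (g ∘ f) x‖ ≤ ‖fderiv 𝕜 g (f x)‖ * ‖fderiv 𝕜 f x‖ := by
  rw [fderiv_comp x hg hf]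
  exact ContinuousLinearMap.opNorm_comp_le _ _

theorem IsOpen.fderivWithin_closure {𝕜 E F : Type*} [NontriviallyNormedField 𝕜]
    [NormedAddCommGroup E] [NormedSpace 𝕜 E] [NormedAddCommGroup F] [NormedSpace 𝕜 F]
    {f : E → F} {s : Set E} {x : E} (hs : IsOpen s) (hx : x ∈ s) :
    fderivWithin 𝕜 f (closure s) x = fderiv 𝕜 f x :=
  fderivWithin_of_mem_nhds (Filter.mem_of_superset (hs.mem_nhds hx) subset_closure)

section

variable {f G v : ℂ → ℂ} {z : ℂ}

theorem ContinuousLinearMap.apply_eq_wirtinger (L : ℂ →L[ℝ] ℂ) (c : ℂ) :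
    L c = c * ((L 1 - I * L I) / 2) + conj c * ((L 1 + I * L I) / 2) := by
  have hc : L c = c.re * L 1 + c.im * L I := by
    calc L c = L (c.re • 1 + c.im • I) := by rw [real_smul, real_smul, mul_one, re_add_im]
      _ = c.re * L 1 + c.im * L I := by rw [map_add, map_smul, map_smul, real_smul, real_smul]
  rw [hc]
  conv_rhs => rw [← re_add_im c]
  simp only [map_add, map_mul, conj_ofReal, conj_I]
  linear_combination (c.im * L I) * I_sq

theorem DifferentiableAt.fderiv_real_apply (hG : DifferentiableAt ℂ G z) (c : ℂ) :
    fderiv ℝ G z c = c * deriv G z := by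
  rw [hG.fderiv_restrictScalars ℝ]
  simp

theorem DifferentiableAt.det_fderiv_real (hG : DifferentiableAt ℂ G z) :
    (fderiv ℝ G z).det = ‖deriv G z‖ ^ 2 := by
  rw [← normSq_eq_norm_sq, ← Algebra.norm_complex_apply, Algebra.norm_apply,
    ContinuousLinearMap.det]
  congr 1
  ext c
  simp [hG.fderiv_real_apply, mul_comm]

theorem DifferentiableAt.abs_det_fderiv_real_le (hG : DifferentiableAt ℂ G z) :
    |(fderiv ℝ G z).det| ≤ ‖fderiv ℝ G z‖ ^ 2 := by
  have h := (fderiv ℝ G z).le_opNorm 1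
  rw [hG.fderiv_real_apply, one_mul, norm_one, mul_one] at h
  rw [hG.det_fderiv_real, abs_of_nonneg (by positivity)]
  gcongr

theorem fderiv_comp_holomorphic_apply (hG : DifferentiableAt ℂ G z)
    (hv : DifferentiableAt ℝ v (G z)) (c : ℂ) :
    fderiv ℝ (v ∘ G) z c = fderiv ℝ v (G z) (c * deriv G z) := by
  rw [fderiv_comp z hv (hG.restrictScalars ℝ), ContinuousLinearMap.comp_apply,
    hG.fderiv_real_apply]

theorem wz_comp (hG : DifferentiableAt ℂ G z) (hv : DifferentiableAt ℝ v (G z)) :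
    wz (v ∘ G) z = deriv G z * wz v (G z) := by
  simp only [wz, fderiv_comp_holomorphic_apply hG hv, one_mul]
  generalize fderiv ℝ v (G z) = L, deriv G z = d
  rw [L.apply_eq_wirtinger d, L.apply_eq_wirtinger (I * d), map_mul, conj_I]
  linear_combination (conj d * (L 1 + I * L I) - d * (L 1 - I * L I)) / 4 * I_sq

theorem wzb_comp (hG : DifferentiableAt ℂ G z) (hv : DifferentiableAt ℝ v (G z)) :
    wzb (v ∘ G) z = conj (deriv G z) * wzb v (G z) := by
  simp only [wzb, fderiv_comp_holomorphic_apply hG hv, one_mul]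
  generalize fderiv ℝ v (G z) = L, deriv G z = d
  rw [L.apply_eq_wirtinger d, L.apply_eq_wirtinger (I * d), map_mul, conj_I]
  linear_combination (d * (L 1 - I * L I) - conj d * (L 1 + I * L I)) / 4 * I_sq

theorem measurable_wz (f : ℂ → ℂ) : Measurable (wz f) :=
  ((measurable_fderiv_apply_const ℝ f 1).sub
    ((measurable_fderiv_apply_const ℝ f I).const_mul I)).div_const 2

theorem measurable_wzb (f : ℂ → ℂ) : Measurable (wzb f) :=
  ((measurable_fderiv_apply_const ℝ f 1).add
    ((measurable_fderiv_apply_const ℝ f I).const_mul I)).div_const 2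

theorem ContinuousLinearMap.norm_apply_one_add_norm_apply_I_le (L : ℂ →L[ℝ] ℂ) :
    ‖L 1‖ + ‖L I‖ ≤ 2 * ‖L‖ := by
  have h1 := L.le_opNorm 1
  have hI := L.le_opNorm I
  rw [norm_one] at h1
  rw [norm_I] at hI
  linarith

theorem norm_wz_le (f : ℂ → ℂ) (z : ℂ) : ‖wz f z‖ ≤ ‖fderiv ℝ f z‖ := by
  have := norm_sub_le (fderiv ℝ f z 1) (I * fderiv ℝ f z I)
  rw [norm_mul, norm_I, one_mul] at this
  rw [wz, norm_div, RCLike.norm_ofNat]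
  linarith [(fderiv ℝ f z).norm_apply_one_add_norm_apply_I_le]

theorem norm_wzb_le (f : ℂ → ℂ) (z : ℂ) : ‖wzb f z‖ ≤ ‖fderiv ℝ f z‖ := by
  have := norm_add_le (fderiv ℝ f z 1) (I * fderiv ℝ f z I)
  rw [norm_mul, norm_I, one_mul] at this
  rw [wzb, norm_div, RCLike.norm_ofNat]
  linarith [(fderiv ℝ f z).norm_apply_one_add_norm_apply_I_le]

section MemLp

variable {μ : Measure ℂ} [IsFiniteMeasure μ] {p : ENNReal} {C : ℝ}

theorem memLp_wz_of_norm_fderiv_le (h : ∀ᵐ z ∂μ, ‖fderiv ℝ f z‖ ≤ C) : MemLp (wz f) p μ :=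
  .of_bound (measurable_wz f).aestronglyMeasurable C
    (h.mono fun z hz => (norm_wz_le f z).trans hz)

theorem memLp_wzb_of_norm_fderiv_le (h : ∀ᵐ z ∂μ, ‖fderiv ℝ f z‖ ≤ C) : MemLp (wzb f) p μ :=
  .of_bound (measurable_wzb f).aestronglyMeasurable C
    (h.mono fun z hz => (norm_wzb_le f z).trans hz)

end MemLp

theorem exists_forall_norm_fderiv_comp_le {s t : Set ℂ} {M : ℝ} (hs : Bornology.IsBounded s)
    (hv : ContDiff ℝ 1 v) (hGts : Set.MapsTo G t s) (hG : ∀ y ∈ t, DifferentiableAt ℝ G y)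
    (hGM : ∀ y ∈ t, ‖fderiv ℝ G y‖ ≤ M) :
    ∃ C, ∀ y ∈ t, ‖fderiv ℝ (v ∘ G) y‖ ≤ C := by
  obtain ⟨K, hK⟩ := hs.isCompact_closure.exists_bound_of_continuousOn
    (hv.continuous_fderiv one_ne_zero).continuousOn
  refine ⟨K * M, fun y hy =>
    (norm_fderiv_comp_le (hv.differentiable one_ne_zero _) (hG y hy)).trans ?_⟩
  exact mul_le_mul (hK _ (subset_closure (hGts hy))) (hGM y hy) (norm_nonneg _)
    ((norm_nonneg _).trans (hK _ (subset_closure (hGts hy))))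

def h1Density (v : ℂ → ℂ) (z : ℂ) : ℝ := ‖v z‖ ^ 2 + ‖fderiv ℝ v z‖ ^ 2

theorem ContDiff.integrableOn_h1Density (hv : ContDiff ℝ 1 v) {s : Set ℂ}
    (hs : Bornology.IsBounded s) : IntegrableOn (h1Density v) s := by
  have hDv := hv.continuous_fderiv one_ne_zero
  have : Continuous (h1Density v) := by unfold h1Density; fun_prop
  exact (this.continuousOn.integrableOn_compact hs.isCompact_closure).mono_set subset_closure

theorem abs_det_mul_h1Density_comp_le {F : ℂ → ℂ} {x : ℂ} {M : ℝ} (hM : 1 ≤ M)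
    (hF : DifferentiableAt ℂ F x) (hG : DifferentiableAt ℝ G (F x))
    (hv : DifferentiableAt ℝ v x) (hGF : G (F x) = x)
    (hFM : ‖fderiv ℝ F x‖ ≤ M) (hGM : ‖fderiv ℝ G (F x)‖ ≤ M) :
    |(fderiv ℝ F x).det| * h1Density (v ∘ G) (F x) ≤ M ^ 4 * h1Density v x := by
  have hdet : |(fderiv ℝ F x).det| ≤ M ^ 2 :=
    hF.abs_det_fderiv_real_le.trans (pow_le_pow_left₀ (norm_nonneg _) hFM 2)
  have hD : ‖fderiv ℝ (v ∘ G) (F x)‖ ≤ ‖fderiv ℝ v x‖ * M := by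
    have := norm_fderiv_comp_le (hGF ▸ hv) hG
    rw [hGF] at this
    exact this.trans (by gcongr)
  calc |(fderiv ℝ F x).det| * h1Density (v ∘ G) (F x)
      ≤ M ^ 2 * (‖v x‖ ^ 2 + (‖fderiv ℝ v x‖ * M) ^ 2) := by
        unfold h1Density
        rw [Function.comp_apply, hGF]
        gcongr
    _ ≤ M ^ 4 * h1Density v x := by
        have hM2 : 1 ≤ M ^ 2 := one_le_pow₀ hM
        unfold h1Density
        nlinarith [mul_le_mul_of_nonneg_right hM2 (sq_nonneg ‖v x‖)]

theorem integral_h1Density_comp_le {s t : Set ℂ} {F : ℂ → ℂ} {M : ℝ}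
    (hs : IsOpen s) (hsb : Bornology.IsBounded s) (ht : IsOpen t) (hF : Set.BijOn F s t)
    (hGF : ∀ x ∈ s, G (F x) = x) (hFhol : DifferentiableOn ℂ F s) (hG : DifferentiableOn ℝ G t)
    (hM : 1 ≤ M) (hFM : ∀ x ∈ s, ‖fderiv ℝ F x‖ ≤ M) (hGM : ∀ y ∈ t, ‖fderiv ℝ G y‖ ≤ M)
    (hv : ContDiff ℝ 1 v) :
    ∫ y in t, h1Density (v ∘ G) y ≤ M ^ 4 * ∫ x in s, h1Density v x := by
  have hFdiff : ∀ x ∈ s, DifferentiableAt ℂ F x := fun x hx =>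
    hFhol.differentiableAt (hs.mem_nhds hx)
  rw [← hF.image_eq, integral_image_eq_integral_abs_det_fderiv_smul volume hs.measurableSet
    (fun x hx => ((hFdiff x hx).restrictScalars ℝ).hasFDerivAt.hasFDerivWithinAt) hF.injOn,
    ← integral_const_mul]
  refine integral_mono_of_nonneg (ae_restrict_of_forall_mem hs.measurableSet fun x _ => ?_)
    ((hv.integrableOn_h1Density hsb).const_mul _)
    (ae_restrict_of_forall_mem hs.measurableSet fun x hx => ?_)
  · unfold h1Density; positivity
  · exact abs_det_mul_h1Density_comp_le hM (hFdiff x hx)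
      (hG.differentiableAt (ht.mem_nhds (hF.mapsTo hx))) (hv.differentiable one_ne_zero x)
      (hGF x hx) (hFM x hx) (hGM _ (hF.mapsTo hx))

end

theorem conformal_pushforward_general
    (Ω : Set ℂ) (hΩ : IsOpen Ω) (hbdd : Bornology.IsBounded Ω)
    (F G : ℂ → ℂ)
    (hF : Set.BijOn F Ω (ball (0 : ℂ) 1))
    (hinv : Set.InvOn G F Ω (ball (0 : ℂ) 1))
    (hFhol : DifferentiableOn ℂ F Ω)
    (hGhol : DifferentiableOn ℂ G (ball (0 : ℂ) 1))
    (hFd : ∃ M : ℝ, (∀ z ∈ closure Ω, ‖fderivWithin ℝ F (closure Ω) z‖ ≤ M) ∧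
      (∀ z ∈ closure (ball (0 : ℂ) 1), ‖fderivWithin ℝ G (closure (ball (0 : ℂ) 1)) z‖ ≤ M)) :
    -- `U` is a bijection (with inverse `u ↦ u ∘ F`) ...
    ((∀ v : ℂ → ℂ, ∀ z ∈ Ω, v (G (F z)) = v z) ∧
     (∀ u : ℂ → ℂ, ∀ z ∈ ball (0 : ℂ) 1, u (F (G z)) = u z)) ∧
    -- ... bounded from `H¹(Ω)` to `H¹(𝔻)` with bounded inverse ...
    (∃ C > 0,
      (∀ v : ℂ → ℂ, ContDiff ℝ 1 v →
        (∫ z in ball (0 : ℂ) 1, ‖v (G z)‖ ^ 2 + ‖fderiv ℝ (v ∘ G) z‖ ^ 2) ≤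
          C * ∫ z in Ω, ‖v z‖ ^ 2 + ‖fderiv ℝ v z‖ ^ 2) ∧
      (∀ u : ℂ → ℂ, ContDiff ℝ 1 u →
        (∫ z in Ω, ‖u (F z)‖ ^ 2 + ‖fderiv ℝ (u ∘ F) z‖ ^ 2) ≤
          C * ∫ z in ball (0 : ℂ) 1, ‖u z‖ ^ 2 + ‖fderiv ℝ u z‖ ^ 2)) ∧
    -- ... and the Wirtinger derivatives transform by the chain rule, preserving `L²`.
    (∀ v₂ : ℂ → ℂ, ∀ z ∈ ball (0 : ℂ) 1, DifferentiableAt ℝ v₂ (G z) →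
      wz (v₂ ∘ G) z = deriv G z * wz v₂ (G z)) ∧
    (∀ v₁ : ℂ → ℂ, ∀ z ∈ ball (0 : ℂ) 1, DifferentiableAt ℝ v₁ (G z) →
      wzb (v₁ ∘ G) z = (starRingEnd ℂ) (deriv G z) * wzb v₁ (G z)) ∧
    (∀ v₂ : ℂ → ℂ, ContDiff ℝ 1 v₂ →
      MemLp (fun z => wz v₂ z) 2 (volume.restrict Ω) →
      MemLp (fun z => wz (v₂ ∘ G) z) 2 (volume.restrict (ball (0 : ℂ) 1))) ∧
    (∀ v₁ : ℂ → ℂ, ContDiff ℝ 1 v₁ →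
      MemLp (fun z => wzb v₁ z) 2 (volume.restrict Ω) →
      MemLp (fun z => wzb (v₁ ∘ G) z) 2 (volume.restrict (ball (0 : ℂ) 1))) := by
  obtain ⟨M₀, hFM₀, hGM₀⟩ := hFd
  have hM : 1 ≤ max M₀ 1 := le_max_right _ _
  have hFM : ∀ x ∈ Ω, ‖fderiv ℝ F x‖ ≤ max M₀ 1 := fun x hx => by
    rw [← hΩ.fderivWithin_closure hx]
    exact (hFM₀ x (subset_closure hx)).trans (le_max_left _ _)
  have hGM : ∀ y ∈ ball (0 : ℂ) 1, ‖fderiv ℝ G y‖ ≤ max M₀ 1 := fun y hy => by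
    rw [← isOpen_ball.fderivWithin_closure hy]
    exact (hGM₀ y (subset_closure hy)).trans (le_max_left _ _)
  have hGdiff : ∀ y ∈ ball (0 : ℂ) 1, DifferentiableAt ℂ G y := fun y hy =>
    hGhol.differentiableAt (isOpen_ball.mem_nhds hy)
  have hG : Set.BijOn G (ball (0 : ℂ) 1) Ω := (Set.bijOn_comm hinv.symm).1 hF
  have hDbound : ∀ v, ContDiff ℝ 1 v → ∃ C, ∀ y ∈ ball (0 : ℂ) 1, ‖fderiv ℝ (v ∘ G) y‖ ≤ C :=
    fun v hv => exists_forall_norm_fderiv_comp_le hbdd hv hG.mapsTo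
      (fun y hy => (hGdiff y hy).restrictScalars ℝ) hGM
  have : IsFiniteMeasure (volume.restrict (ball (0 : ℂ) 1)) :=
    isFiniteMeasure_restrict.2 measure_ball_lt_top.ne
  refine ⟨⟨fun v z hz => congrArg v (hinv.1 hz), fun u z hz => congrArg u (hinv.2 hz)⟩,
    ⟨max M₀ 1 ^ 4, pow_pos (zero_lt_one.trans_le hM) 4, fun v hv => ?_, fun u hu => ?_⟩,
    fun v z hz hv => wz_comp (hGdiff z hz) hv, fun v z hz hv => wzb_comp (hGdiff z hz) hv,
    fun v hv _ => ?_, fun v hv _ => ?_⟩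
  · exact integral_h1Density_comp_le hΩ hbdd isOpen_ball hF (fun x hx => hinv.1 hx) hFhol
      (hGhol.restrictScalars ℝ) hM hFM hGM hv
  · exact integral_h1Density_comp_le isOpen_ball isBounded_ball hΩ hG (fun y hy => hinv.2 hy)
      hGhol (hFhol.restrictScalars ℝ) hM hGM hFM hu
  · obtain ⟨C, hC⟩ := hDbound v hv
    exact memLp_wz_of_norm_fderiv_le (ae_restrict_of_forall_mem measurableSet_ball hC)
  · obtain ⟨C, hC⟩ := hDbound v hv
    exact memLp_wzb_of_norm_fderiv_le (ae_restrict_of_forall_mem measurableSet_ball hC)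

/-- Pushforward by a conformal map: let `F : Ω → 𝔻` be a bijective holomorphic map with
holomorphic inverse `G`, both extending `C¹` to the closures with bounded derivatives. Then
`U : v ↦ v ∘ G` is a bounded bijection from `H¹(Ω)` to `H¹(𝔻)` (with inverse `u ↦ u ∘ F`),
and the Wirtinger derivatives transform by the chain rule
`∂_z(v∘G) = G'·(∂_z v)∘G`, `∂_{z̄}(v∘G) = (G')*·(∂_{z̄} v)∘G`, preserving membership
in `L²`. Functions are represented by `C¹` representatives defined on all of `ℂ`. -/
theorem conformal_pushforward
    (Ω : Set ℂ) (hΩ : IsOpen Ω) (hbdd : Bornology.IsBounded Ω)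
    (F G : ℂ → ℂ)
    (hF : Set.BijOn F Ω (ball (0 : ℂ) 1))
    (hinv : Set.InvOn G F Ω (ball (0 : ℂ) 1))
    (hFhol : DifferentiableOn ℂ F Ω)
    (hGhol : DifferentiableOn ℂ G (ball (0 : ℂ) 1))
    (hFC1 : ContDiffOn ℝ 1 F (closure Ω))
    (hGC1 : ContDiffOn ℝ 1 G (closure (ball (0 : ℂ) 1)))
    (hFd : ∃ M : ℝ, (∀ z ∈ closure Ω, ‖fderivWithin ℝ F (closure Ω) z‖ ≤ M) ∧
      (∀ z ∈ closure (ball (0 : ℂ) 1), ‖fderivWithin ℝ G (closure (ball (0 : ℂ) 1)) z‖ ≤ M)) :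
    -- `U` is a bijection (with inverse `u ↦ u ∘ F`) ...
    ((∀ v : ℂ → ℂ, ∀ z ∈ Ω, v (G (F z)) = v z) ∧
     (∀ u : ℂ → ℂ, ∀ z ∈ ball (0 : ℂ) 1, u (F (G z)) = u z)) ∧
    -- ... bounded from `H¹(Ω)` to `H¹(𝔻)` with bounded inverse ...
    (∃ C > 0,
      (∀ v : ℂ → ℂ, ContDiff ℝ 1 v →
        (∫ z in ball (0 : ℂ) 1, ‖v (G z)‖ ^ 2 + ‖fderiv ℝ (v ∘ G) z‖ ^ 2) ≤
          C * ∫ z in Ω, ‖v z‖ ^ 2 + ‖fderiv ℝ v z‖ ^ 2) ∧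
      (∀ u : ℂ → ℂ, ContDiff ℝ 1 u →
        (∫ z in Ω, ‖u (F z)‖ ^ 2 + ‖fderiv ℝ (u ∘ F) z‖ ^ 2) ≤
          C * ∫ z in ball (0 : ℂ) 1, ‖u z‖ ^ 2 + ‖fderiv ℝ u z‖ ^ 2)) ∧
    -- ... and the Wirtinger derivatives transform by the chain rule, preserving `L²`.
    (∀ v₂ : ℂ → ℂ, ∀ z ∈ ball (0 : ℂ) 1, DifferentiableAt ℝ v₂ (G z) →
      wz (v₂ ∘ G) z = deriv G z * wz v₂ (G z)) ∧
    (∀ v₁ : ℂ → ℂ, ∀ z ∈ ball (0 : ℂ) 1, DifferentiableAt ℝ v₁ (G z) →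
      wzb (v₁ ∘ G) z = (starRingEnd ℂ) (deriv G z) * wzb v₁ (G z)) ∧
    (∀ v₂ : ℂ → ℂ, ContDiff ℝ 1 v₂ →
      MemLp (fun z => wz v₂ z) 2 (volume.restrict Ω) →
      MemLp (fun z => wz (v₂ ∘ G) z) 2 (volume.restrict (ball (0 : ℂ) 1))) ∧
    (∀ v₁ : ℂ → ℂ, ContDiff ℝ 1 v₁ →
      MemLp (fun z => wzb v₁ z) 2 (volume.restrict Ω) →
      MemLp (fun z => wzb (v₁ ∘ G) z) 2 (volume.restrict (ball (0 : ℂ) 1))) :=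
  conformal_pushforward_general Ω hΩ hbdd F G hF hinv hFhol hGhol hFd

end
end
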